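/- Let l ≥ 1 and let k_1,…,k_l be positive integers. Then in ℋ¹ one has ∑_{j=0}^{l} (−1)^j · d(z_{k_j} z_{k_{j-1}} ⋯ z_{k_1}) * (z_{k_{j+1}} z_{k_{j+2}} ⋯ z_{k_l}) = 0, where for j = 0 the word z_{k_j}⋯z_{k_1} is the empty word 1 and for j = l the word z_{k_{j+1}}⋯z_{k_l} is the empty word 1. -/

import Mathlib

open scoped BigOperators

/-- The product of `ℤ/pℤ` over all primes `p`. -/
abbrev PreA : Type := ∀ p : Nat.Primes, ZMod p

/-- The ideal of families that vanish for all but finitely many primes. -/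
def nullIdeal : Ideal PreA where
  carrier := {f | {p | f p ≠ 0}.Finite}
  zero_mem' := by simp
  add_mem' := by
    intro f g hf hg
    refine (hf.union hg).subset fun p hp => ?_
    by_contra hc
    simp only [Set.mem_union, Set.mem_setOf_eq, not_or, not_not] at hc
    exact hp (by simp [Set.mem_setOf_eq, hc.1, hc.2])
  smul_mem' := by
    intro c f hf
    refine hf.subset fun p hp => ?_
    simp only [Set.mem_setOf_eq] at hp ⊢
    intro h0
    exact hp (by simp [h0])

/-- The ring `𝒜 = (∏_p ℤ/pℤ)/(⊕_p ℤ/pℤ)`. -/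
abbrev A : Type := PreA ⧸ nullIdeal

/-- `zetaSum p ks b` is `∑_{b > m₁ > ⋯ > m_n ≥ 1} ∏ mᵢ^{-kᵢ}` in `ℤ/pℤ`. -/
def zetaSum (p : ℕ) : List ℕ → ℕ → ZMod p
  | [], _ => 1
  | k :: ks, b => ∑ m ∈ Finset.Ico 1 b, ((m : ZMod p)⁻¹) ^ k * zetaSum p ks m

/-- `zetaStarSum p ks b` is `∑_{b > m₁ ≥ ⋯ ≥ m_n ≥ 1} ∏ mᵢ^{-kᵢ}` in `ℤ/pℤ`. -/
def zetaStarSum (p : ℕ) : List ℕ → ℕ → ZMod p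
  | [], _ => 1
  | k :: ks, b => ∑ m ∈ Finset.Ico 1 b, ((m : ZMod p)⁻¹) ^ k * zetaStarSum p ks (m + 1)

/-- The finite multiple zeta value `ζ_𝒜(k₁,…,k_n)`. -/
def zetaA (ks : List ℕ) : A :=
  Ideal.Quotient.mk nullIdeal (fun p => zetaSum p ks p)

/-- The finite multiple zeta-star value `ζ⋆_𝒜(k₁,…,k_n)`. -/
def zetaStarA (ks : List ℕ) : A :=
  Ideal.Quotient.mk nullIdeal (fun p => zetaStarSum p ks p)

/-- `ℋ¹ = ℚ⟨z₁,z₂,…⟩`, the noncommutative polynomial algebra on variables `z_k`, `k ≥ 1`. -/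
abbrev H1 : Type := MonoidAlgebra ℚ (FreeMonoid ℕ+)

/-- The monomial (word) `z_{k₁} ⋯ z_{k_n}` in `ℋ¹`. -/
noncomputable def word (w : List ℕ+) : H1 :=
  MonoidAlgebra.of ℚ (FreeMonoid ℕ+) (FreeMonoid.ofList w)

/-- Shuffle product on words (with values in `ℋ¹`). -/
noncomputable def shuffleW : List ℕ+ → List ℕ+ → H1
  | [], w => word w
  | v, [] => word v
  | k :: v, l :: w => word [k] * shuffleW v (l :: w) + word [l] * shuffleW (k :: v) w
  termination_by v w => v.length + w.length
  decreasing_by all_goals first | (simp; omega) | simp | omega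

/-- The shuffle product `ш` on `ℋ¹`, as the bilinear extension of `shuffleW`. -/
noncomputable def shuffle (x y : H1) : H1 :=
  Finsupp.sum x.coeff fun v c => Finsupp.sum y.coeff fun w c' =>
    (c * c') • shuffleW (FreeMonoid.toList v) (FreeMonoid.toList w)

/-- Harmonic product on words (with values in `ℋ¹`). -/
noncomputable def harmW : List ℕ+ → List ℕ+ → H1
  | [], w => word w
  | v, [] => word v
  | k :: v, l :: w =>
      word [k] * harmW v (l :: w) + word [l] * harmW (k :: v) w
        + word [k + l] * harmW v w
  termination_by v w => v.length + w.length
  decreasing_by all_goals first | (simp; omega) | simp | omega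

/-- The harmonic product `*` on `ℋ¹`, as the bilinear extension of `harmW`. -/
noncomputable def harm (x y : H1) : H1 :=
  Finsupp.sum x.coeff fun v c => Finsupp.sum y.coeff fun w c' =>
    (c * c') • harmW (FreeMonoid.toList v) (FreeMonoid.toList w)

/-- Star-harmonic product on words (with values in `ℋ¹`). -/
noncomputable def harmStarW : List ℕ+ → List ℕ+ → H1
  | [], w => word w
  | v, [] => word v
  | k :: v, l :: w =>
      word [k] * harmStarW v (l :: w) + word [l] * harmStarW (k :: v) w
        - word [k + l] * harmStarW v w
  termination_by v w => v.length + w.length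
  decreasing_by all_goals first | (simp; omega) | simp | omega

/-- The product `∗̄` on `ℋ¹`, as the bilinear extension of `harmStarW`. -/
noncomputable def harmStar (x y : H1) : H1 :=
  Finsupp.sum x.coeff fun v c => Finsupp.sum y.coeff fun w c' =>
    (c * c') • harmStarW (FreeMonoid.toList v) (FreeMonoid.toList w)

/-- The image of a rational number in `𝒜`. -/
def ratA (q : ℚ) : A :=
  Ideal.Quotient.mk nullIdeal (fun p => (q.num : ZMod p) * ((q.den : ZMod p))⁻¹)

/-- The `ℚ`-linear map `Z_𝒜 : ℋ¹ → 𝒜` sending `z_{k₁} ⋯ z_{k_n}` to `ζ_𝒜(k₁,…,k_n)`. -/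
noncomputable def ZA (x : H1) : A :=
  Finsupp.sum x.coeff fun w c => ratA c * zetaA ((FreeMonoid.toList w).map (fun k => (k : ℕ)))

/-- The `ℚ`-linear map `Z̄_𝒜 : ℋ¹ → 𝒜` sending `z_{k₁} ⋯ z_{k_n}` to `ζ⋆_𝒜(k₁,…,k_n)`. -/
noncomputable def ZSA (x : H1) : A :=
  Finsupp.sum x.coeff fun w c => ratA c * zetaStarA ((FreeMonoid.toList w).map (fun k => (k : ℕ)))

/-- Sum of a list of positive integers (equal to the actual sum for nonempty lists). -/
def psum : List ℕ+ → ℕ+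
  | [] => 1
  | k :: t => t.foldl (· + ·) k

/-- The map `d` on words: `d(z_{k₁}⋯z_{k_n}) = ∑_{m} ∑_{0=i₀<⋯<i_m=n}
`z_{k_{i₀+1}+⋯+k_{i₁}} ⋯ z_{k_{i_{m-1}+1}+⋯+k_{i_m}}`. -/
noncomputable def dW (w : List ℕ+) : H1 :=
  ∑ c : Composition w.length, word ((w.splitWrtComposition c).map psum)

/-- `z_a` for a tuple `a = (a₁,…,a_m; b₁,…,b_m; c₁,…,c_n) ∈ I_{m,n}`:
`∑_{σ,τ ∈ S_m} z_{a_{σ(1)}} z_{b_{τ(1)}} ⋯ z_{a_{σ(m)}} z_{b_{τ(m)}} ш z_{c₁} ш ⋯ ш z_{c_n}`. -/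
noncomputable def zTuple {m n : ℕ} (a b : Fin m → ℕ+) (c : Fin n → ℕ+) : H1 :=
  ∑ σ : Equiv.Perm (Fin m), ∑ τ : Equiv.Perm (Fin m),
    (List.ofFn c).foldl (fun w k => shuffle w (word [k]))
      (word ((List.ofFn (fun i => [a (σ i), b (τ i)])).flatten))

/-- The statement `P_{m,n}`: `Z_𝒜(z_a) = Z̄_𝒜(z_a) = 0` for all `a ∈ I_{m,n}`. -/
def Pmn (m n : ℕ) : Prop :=
  ∀ (a b : Fin m → ℕ+) (c : Fin n → ℕ+),
    (∀ i, Odd (a i : ℕ)) → (∀ i, Odd (b i : ℕ)) → (∀ j, Even (c j : ℕ)) →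
    ZA (zTuple a b c) = 0 ∧ ZSA (zTuple a b c) = 0

/-- The list `{c}^{n₀}, a, {c}^{n₁}, b, {c}^{n₂}, …, a, {c}^{n_{2m-1}}, b, {c}^{n_{2m}}`. -/
def bbList (a b c : ℕ) (m : ℕ) (f : Fin (2 * m + 1) → ℕ) : List ℕ :=
  (List.ofFn (fun j : Fin m =>
      List.replicate (f ⟨2 * j.val, by have := j.isLt; omega⟩) c ++ [a]
        ++ List.replicate (f ⟨2 * j.val + 1, by have := j.isLt; omega⟩) c ++ [b])).flatten
    ++ List.replicate (f ⟨2 * m, by omega⟩) c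

/-!
Write `D_j = d(z_{k_j} ⋯ z_{k_1})` and `R_j = z_{k_{j+1}} ⋯ z_{k_l}`. Splitting off the first block
of `d` gives `D_j = ∑_{i<j} z_{k_{i+1}+⋯+k_j} D_i` for `j ≥ 1`. Let `A_j` (`leadingBlockTerms`)
be the part of `D_j * R_j` whose first letter is such a first block `z_{k_{i+1}+⋯+k_j}`.
Expanding `D_j * R_j` by the recursion of `*` in the first letters of both factors, the terms
starting with `z_{k_{j+1}}` or `z_{k_{i+1}+⋯+k_{j+1}}` are exactly `A_{j+1}`, so
`D_j * R_j = A_j + A_{j+1}` for `j < l`, while `D_l * R_l = A_l` and `A_0 = 0`.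
The alternating sum therefore telescopes to `0`.
-/

lemma word_nil : word [] = 1 := rfl

lemma word_append (u v : List ℕ+) : word (u ++ v) = word u * word v := by
  simp only [word, ← map_mul]
  rfl

lemma single_eq_smul_word (u : FreeMonoid ℕ+) (c : ℚ) :
    MonoidAlgebra.single u c = c • word u.toList := by
  rw [word, MonoidAlgebra.of_apply, FreeMonoid.ofList_toList, MonoidAlgebra.smul_single,
    smul_eq_mul, mul_one]

lemma harm_word_word (v w : List ℕ+) : harm (word v) (word w) = harmW v w := by
  simp [harm, word, MonoidAlgebra.of_apply]

lemma harm_zero_left (y : H1) : harm 0 y = 0 := by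
  simp [harm]

lemma harm_add_left (x x' y : H1) : harm (x + x') y = harm x y + harm x' y := by
  classical
  rw [harm, harm, harm, MonoidAlgebra.coeff_add, Finsupp.sum_add_index]
  · intro v _; simp
  · intro v _ c c'; simp [add_mul, add_smul, Finsupp.sum_add]

lemma harm_smul_left (c : ℚ) (x y : H1) : harm (c • x) y = c • harm x y := by
  rw [harm, harm, MonoidAlgebra.coeff_smul, Finsupp.sum_smul_index' (by simp), Finsupp.smul_sum]
  refine Finsupp.sum_congr fun v _ => ?_
  rw [Finsupp.smul_sum]
  refine Finsupp.sum_congr fun w _ => ?_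
  rw [smul_eq_mul, smul_smul, mul_assoc]

lemma harm_sum_left {ι : Type*} (s : Finset ι) (f : ι → H1) (y : H1) :
    harm (∑ i ∈ s, f i) y = ∑ i ∈ s, harm (f i) y :=
  map_sum (AddMonoidHom.mk' (harm · y) (harm_add_left · · y)) f s

lemma harmW_nil_left (w : List ℕ+) : harmW [] w = word w := by
  rw [harmW]

lemma harmW_nil_right (v : List ℕ+) : harmW v [] = word v := by
  cases v <;> rw [harmW.eq_def]

lemma harm_one_left (w : List ℕ+) : harm 1 (word w) = word w := by
  rw [← word_nil, harm_word_word, harmW_nil_left]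

lemma harm_one_right (x : H1) : harm x 1 = x := by
  induction x using MonoidAlgebra.induction_linear with
  | zero => exact harm_zero_left 1
  | add x x' hx hx' => rw [harm_add_left, hx, hx']
  | single u c =>
      rw [single_eq_smul_word, harm_smul_left, ← word_nil, harm_word_word, harmW_nil_right]

lemma harm_word_mul_word_cons (a b : ℕ+) (x : H1) (w : List ℕ+) :
    harm (word [a] * x) (word (b :: w)) =
      word [a] * harm x (word (b :: w)) + word [b] * harm (word [a] * x) (word w)
        + word [a + b] * harm x (word w) := by
  induction x using MonoidAlgebra.induction_linear with
  | zero => simp [harm_zero_left]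
  | add x x' hx hx' =>
      simp only [mul_add, harm_add_left, hx, hx']
      abel
  | single u c =>
      simp only [single_eq_smul_word, mul_smul_comm, harm_smul_left, ← word_append,
        List.singleton_append, harm_word_word, harmW.eq_3, smul_add]

lemma coe_foldl_add (a : ℕ+) (t : List ℕ+) :
    ((t.foldl (· + ·) a : ℕ+) : ℕ) = a + (t.map PNat.val).sum := by
  induction t generalizing a with
  | nil => simp
  | cons b t ih => simp [ih, add_assoc]

lemma coe_psum {s : List ℕ+} (hs : s ≠ []) : (psum s : ℕ) = (s.map PNat.val).sum := by
  obtain ⟨a, t, rfl⟩ := List.exists_cons_of_ne_nil hs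
  simp [psum, coe_foldl_add]

lemma psum_reverse (s : List ℕ+) : psum s.reverse = psum s := by
  rcases eq_or_ne s [] with rfl | hs
  · rfl
  · exact PNat.eq <| by rw [coe_psum (by simpa), coe_psum hs, List.map_reverse, List.sum_reverse]

lemma psum_append_singleton {s : List ℕ+} (hs : s ≠ []) (a : ℕ+) :
    psum (s ++ [a]) = psum s + a :=
  PNat.eq <| by simp [coe_psum hs, coe_psum (s := s ++ [a]) (by simp)]

namespace Composition

def cons {n : ℕ} (r : Fin n) (c : Composition (n - (r + 1))) : Composition n where
  blocks := (r + 1) :: c.blocks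
  blocks_pos := by
    rintro i (_ | ⟨_, hi⟩)
    exacts [Nat.succ_pos r, c.blocks_pos hi]
  blocks_sum := by
    have := r.isLt
    simp [c.blocks_sum]

lemma cons_bijective {n : ℕ} (hn : 0 < n) :
    Function.Bijective fun x : Σ r : Fin n, Composition (n - (r + 1)) => cons x.1 x.2 := by
  constructor
  · rintro ⟨r, c⟩ ⟨r', c'⟩ h
    obtain ⟨hr, hc⟩ := List.cons_eq_cons.mp (congrArg blocks h)
    obtain rfl : r = r' := Fin.ext (by simpa using hr)
    obtain rfl : c = c' := Composition.ext hc
    rfl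
  · intro c
    rcases hc : c.blocks with _ | ⟨b, t⟩
    · exact absurd (c.blocks_eq_nil.mp hc) hn.ne'
    have hb := c.blocks_pos (hc ▸ List.mem_cons_self ..)
    have hsum := c.blocks_sum
    rw [hc, List.sum_cons] at hsum
    refine ⟨⟨⟨b - 1, by omega⟩,
      ⟨t, fun hi => c.blocks_pos (hc ▸ List.mem_cons_of_mem _ hi), by simp; omega⟩⟩, ?_⟩
    ext1
    simp [cons, hc]
    omega

end Composition

lemma dW_eq_sum_compositions {v : List ℕ+} {n : ℕ} (hv : v.length = n) :
    dW v = ∑ c : Composition n, word ((v.splitWrtComposition c).map psum) := by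
  subst hv
  rfl

lemma dW_nil : dW [] = 1 := by
  have : Subsingleton (Composition 0) :=
    ⟨fun c c' => Composition.ext (by rw [c.blocks_eq_nil.mpr rfl, c'.blocks_eq_nil.mpr rfl])⟩
  rw [dW_eq_sum_compositions (n := 0) rfl, Fintype.sum_subsingleton _ (Composition.ones 0)]
  rfl

lemma dW_eq_sum_first_block {w : List ℕ+} (hw : w ≠ []) :
    dW w = ∑ r ∈ Finset.range w.length,
      word [psum (w.take (r + 1))] * dW (w.drop (r + 1)) := by
  have hbij := Composition.cons_bijective (List.length_pos_iff.mpr hw)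
  rw [dW, ← Fintype.sum_bijective _ hbij _ _ fun _ => rfl, Fintype.sum_sigma,
    ← Fin.sum_univ_eq_sum_range]
  refine Finset.sum_congr rfl fun r _ => ?_
  rw [dW_eq_sum_compositions (List.length_drop ..), Finset.mul_sum]
  refine Finset.sum_congr rfl fun c _ => ?_
  rw [List.splitWrtComposition, Composition.cons, List.splitWrtCompositionAux_cons, List.map_cons,
    ← List.singleton_append, word_append]
  rfl

lemma dW_reverse_take {w : List ℕ+} {j : ℕ} (hj₀ : 0 < j) (hj : j ≤ w.length) :
    dW (w.take j).reverse =
      ∑ i ∈ Finset.range j, word [psum ((w.take j).drop i)] * dW (w.take i).reverse := by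
  have hlen : (w.take j).reverse.length = j := by simpa using hj
  rw [dW_eq_sum_first_block (List.ne_nil_of_length_pos (by omega)), hlen,
    ← Finset.sum_range_reflect]
  refine Finset.sum_congr rfl fun i hi => ?_
  have hij := Finset.mem_range.mp hi
  have hlen' : (w.take j).length = j := by simpa using hj
  rw [List.take_reverse, List.drop_reverse, psum_reverse, hlen', List.take_take,
    show j - (j - 1 - i + 1) = i by omega, min_eq_left hij.le]

noncomputable def leadingBlockTerms (w : List ℕ+) (j : ℕ) : H1 :=
  ∑ i ∈ Finset.range j,
    word [psum ((w.take j).drop i)] * harm (dW (w.take i).reverse) (word (w.drop j))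

lemma harm_dW_nil {w : List ℕ+} (hw : w ≠ []) :
    harm (dW []) (word w) = leadingBlockTerms w 1 := by
  obtain ⟨a, t, rfl⟩ := List.exists_cons_of_ne_nil hw
  simp only [leadingBlockTerms, Finset.sum_range_one, dW_nil, harm_one_left, List.take_zero,
    List.reverse_nil, List.drop_zero, List.drop_succ_cons]
  rw [← List.singleton_append, word_append]
  rfl

lemma psum_take_succ_drop {w : List ℕ+} {i j : ℕ} (hij : i < j) (hj : j < w.length) :
    psum ((w.take (j + 1)).drop i) = psum ((w.take j).drop i) + w[j] := by
  rw [List.take_succ_eq_append_getElem hj, List.drop_append_of_le_length (by simp; omega),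
    psum_append_singleton (by simp; omega)]

lemma harm_dW_reverse_take {w : List ℕ+} {j : ℕ} (hj₀ : 0 < j) (hj : j < w.length) :
    harm (dW (w.take j).reverse) (word (w.drop j)) =
      leadingBlockTerms w j + leadingBlockTerms w (j + 1) := by
  have hexpand := dW_reverse_take hj₀ hj.le
  have hdrop : w.drop j = w[j] :: w.drop (j + 1) := List.drop_eq_getElem_cons hj
  have hlast : psum ((w.take (j + 1)).drop j) = w[j] := by
    rw [List.take_succ_eq_append_getElem hj, List.drop_append_of_le_length (by simp; omega),
      List.drop_eq_nil_of_le (by simp)]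
    rfl
  have hnext : leadingBlockTerms w (j + 1) =
      ∑ i ∈ Finset.range j, word [psum ((w.take j).drop i) + w[j]] *
          harm (dW (w.take i).reverse) (word (w.drop (j + 1))) +
        word [w[j]] * harm (dW (w.take j).reverse) (word (w.drop (j + 1))) := by
    rw [leadingBlockTerms, Finset.sum_range_succ, hlast]
    refine congrArg (· + _) (Finset.sum_congr rfl fun i hi => ?_)
    rw [psum_take_succ_drop (Finset.mem_range.mp hi) hj]
  conv_lhs =>
    rw [hexpand, harm_sum_left, hdrop]
    enter [2, i]
    rw [harm_word_mul_word_cons]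
  rw [Finset.sum_add_distrib, Finset.sum_add_distrib, ← Finset.mul_sum, ← harm_sum_left,
    ← hexpand, ← hdrop, hnext, leadingBlockTerms]
  abel

lemma harm_dW_reverse_length {w : List ℕ+} (hw : w ≠ []) :
    harm (dW w.reverse) (word []) = leadingBlockTerms w w.length := by
  have hexpand := dW_reverse_take (List.length_pos_iff.mpr hw) le_rfl
  rw [List.take_length] at hexpand
  simp only [word_nil, harm_one_right, leadingBlockTerms, List.drop_length, List.take_length,
    hexpand]

lemma sum_range_neg_one_pow_smul_eq_zero {R M : Type*} [Ring R] [AddCommGroup M] [Module R M]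
    {P A : ℕ → M} {n : ℕ} (hA : A 0 = 0) (hP : ∀ j < n, P j = A j + A (j + 1))
    (hn : P n = A n) : ∑ j ∈ Finset.range (n + 1), (-1 : R) ^ j • P j = 0 := by
  have partial_sum :
      ∀ m ≤ n, ∑ j ∈ Finset.range m, (-1 : R) ^ j • P j = -((-1 : R) ^ m • A m) := by
    intro m
    induction m with
    | zero => simp [hA]
    | succ m ih =>
        intro hm
        rw [Finset.sum_range_succ, ih (by omega), hP m (by omega), pow_succ]
        simp only [smul_add, mul_neg_one, neg_smul]
        abel
  rw [Finset.sum_range_succ, partial_sum n le_rfl, hn, neg_add_cancel]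

theorem semi_reversal (l : ℕ) (hl : 1 ≤ l) (k : Fin l → ℕ+) :
    ∑ j ∈ Finset.range (l + 1),
      ((-1 : ℚ) ^ j) •
        harm (dW (((List.ofFn k).take j).reverse)) (word ((List.ofFn k).drop j)) = 0 := by
  set w := List.ofFn k
  have hlen : w.length = l := List.length_ofFn
  have hw : w ≠ [] := List.ne_nil_of_length_pos (by omega)
  refine sum_range_neg_one_pow_smul_eq_zero (A := leadingBlockTerms w)
    (Finset.sum_range_zero _) (fun j hj => ?_) ?_
  · rcases Nat.eq_zero_or_pos j with rfl | hj₀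
    · simpa [leadingBlockTerms] using harm_dW_nil hw
    · exact harm_dW_reverse_take hj₀ (hlen ▸ hj)
  · rw [← hlen, List.take_length, List.drop_length]
    exact harm_dW_reverse_length hw
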